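/- arXiv:1912.02160 — 6 statements merged into one kernel-verified Lean document; each statement's English description precedes it below -/
import Mathlib

section
/- Let Z and X be compact metric spaces with their Borel σ-algebras, ζ a Borel probability measure on Z, ν a Borel probability measure on X, G : Z → X continuous, c : X × X → ℝ continuous and nonnegative, and ε > 0. Then the entropically smoothed optimal transport cost between the pushforward G♯ζ and ν satisfies the reparameterization identity: inf over γ ∈ Γ(G♯ζ, ν) of [∫_{X×X} c(x,y) dγ(x,y) + ε·KL(γ ‖ (G♯ζ)⊗ν)] equals inf over γ̄ ∈ Γ(ζ, ν) of [∫_{Z×X} c(G(z),y) dγ̄(z,y) + ε·KL((G,id)♯γ̄ ‖ (G♯ζ)⊗ν)], where (G,id)♯γ̄ is the pushforward of γ̄ under the map (z,y) ↦ (G(z),y). -/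
open MeasureTheory Real ProbabilityTheory

open Classical in
/-- Kullback–Leibler divergence: `∫ log(dμ/dρ) dμ` if `μ ≪ ρ`, `+∞` otherwise. -/
noncomputable def KL {Ω : Type*} [MeasurableSpace Ω] (μ ρ : Measure Ω) : EReal :=
  if μ ≪ ρ then ((∫ ω, Real.log ((μ.rnDeriv ρ ω).toReal) ∂μ : ℝ) : EReal) else ⊤

/-- `γ` is a coupling of `μ` and `ν`. -/
def IsCoupling {A B : Type*} [MeasurableSpace A] [MeasurableSpace B]
    (γ : Measure (A × B)) (μ : Measure A) (ν : Measure B) : Prop :=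
  IsProbabilityMeasure γ ∧ γ.map Prod.fst = μ ∧ γ.map Prod.snd = ν

lemma map_compProd_comap {Z X Y : Type*} [MeasurableSpace Z] [MeasurableSpace X]
    [MeasurableSpace Y] (ζ : Measure Z) [SFinite ζ] (κ : Kernel X Y) [IsSFiniteKernel κ]
    {G : Z → X} (hG : Measurable G) :
    ((ζ ⊗ₘ (κ.comap G hG)).map (fun p : Z × Y => (G p.1, p.2))) = (ζ.map G) ⊗ₘ κ := by
  have hF : Measurable fun p : Z × Y => (G p.1, p.2) :=
    (hG.comp measurable_fst).prodMk measurable_snd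
  ext s hs
  rw [Measure.map_apply hF hs, Measure.compProd_apply (hF hs), Measure.compProd_apply hs,
    lintegral_map (Kernel.measurable_kernel_prodMk_left hs) hG]
  exact lintegral_congr fun z => by rw [Kernel.comap_apply]; rfl

theorem smoothed_OT_reparameterization
    {Z X : Type*} [MetricSpace Z] [CompactSpace Z] [MeasurableSpace Z] [BorelSpace Z]
    [MetricSpace X] [CompactSpace X] [MeasurableSpace X] [BorelSpace X]
    (ζ : Measure Z) [IsProbabilityMeasure ζ] (ν : Measure X) [IsProbabilityMeasure ν]
    (G : Z → X) (hG : Continuous G)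
    (c : X × X → ℝ) (hc : Continuous c) (hc0 : ∀ p, 0 ≤ c p)
    (ε : ℝ) (hε : 0 < ε) :
    (⨅ γ : {γ : Measure (X × X) // IsCoupling γ (ζ.map G) ν},
      ((∫ p, c p ∂γ.1 : ℝ) : EReal) + (ε : EReal) * KL γ.1 ((ζ.map G).prod ν))
    =
    ⨅ γ : {γ : Measure (Z × X) // IsCoupling γ ζ ν},
      ((∫ p, c (G p.1, p.2) ∂γ.1 : ℝ) : EReal)
        + (ε : EReal) * KL (γ.1.map (fun p => (G p.1, p.2))) ((ζ.map G).prod ν) := by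
  have hGm : Measurable G := hG.measurable
  have hF : Measurable fun p : Z × X => (G p.1, p.2) :=
    (hGm.comp measurable_fst).prodMk measurable_snd
  have hcost : ∀ (γ : Measure (Z × X)) [IsProbabilityMeasure γ],
      ∫ p, c p ∂(γ.map fun p : Z × X => (G p.1, p.2)) = ∫ p, c (G p.1, p.2) ∂γ := by
    intro γ _
    rw [integral_map hF.aemeasurable (hc.aestronglyMeasurable)]
  apply le_antisymm
  · -- LHS ≤ RHS
    refine le_iInf fun γ => ?_
    obtain ⟨hprob, hfst, hsnd⟩ := γ.2
    have hprob' : IsProbabilityMeasure (γ.1.map fun p : Z × X => (G p.1, p.2)) :=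
      Measure.isProbabilityMeasure_map hF.aemeasurable
    have h1 : (γ.1.map fun p : Z × X => (G p.1, p.2)).map Prod.fst = ζ.map G := by
      rw [Measure.map_map measurable_fst hF]
      have : (Prod.fst ∘ fun p : Z × X => (G p.1, p.2)) = G ∘ Prod.fst := rfl
      rw [this, ← Measure.map_map hGm measurable_fst, hfst]
    have h2 : (γ.1.map fun p : Z × X => (G p.1, p.2)).map Prod.snd = ν := by
      rw [Measure.map_map measurable_snd hF]
      exact hsnd
    refine iInf_le_of_le ⟨γ.1.map fun p : Z × X => (G p.1, p.2), hprob', h1, h2⟩ (le_of_eq ?_)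
    haveI := γ.2.1
    congr 1
    exact_mod_cast congrArg (fun r : ℝ => (r : EReal)) (hcost γ.1)
  · -- RHS ≤ LHS
    refine le_iInf fun γ => ?_
    obtain ⟨hprob, hfst, hsnd⟩ := γ.2
    haveI := hprob
    haveI : Nonempty X := ν.nonempty_of_neZero
    have hfst' : γ.1.fst = ζ.map G := hfst
    set κ := γ.1.condKernel with hκ
    set γb : Measure (Z × X) := ζ ⊗ₘ (κ.comap G hGm) with hγb
    have hmap : γb.map (fun p : Z × X => (G p.1, p.2)) = γ.1 := by
      have hdis := γ.1.disintegrate γ.1.condKernel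
      rw [hfst'] at hdis
      rw [hγb, map_compProd_comap ζ κ hGm]
      exact hdis
    haveI : IsProbabilityMeasure γb := by
      rw [hγb]; infer_instance
    have hb1 : γb.map Prod.fst = ζ := by
      have := Measure.fst_compProd ζ (κ.comap G hGm)
      exact this
    have hb2 : γb.map Prod.snd = ν := by
      have hcomp : (Prod.snd ∘ fun p : Z × X => (G p.1, p.2)) = (Prod.snd : Z × X → X) := rfl
      have : γb.map Prod.snd = (γb.map fun p : Z × X => (G p.1, p.2)).map Prod.snd := by
        rw [Measure.map_map measurable_snd hF, hcomp]
      rw [this, hmap, hsnd]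
    refine iInf_le_of_le ⟨γb, this, hb1, hb2⟩ (le_of_eq ?_)
    rw [hmap]
    congr 1
    have := hcost γb
    rw [hmap] at this
    exact_mod_cast congrArg (fun r : ℝ => (r : EReal)) this.symm
end

section
/- Let Z and X be compact metric spaces with their Borel σ-algebras, ζ a Borel probability measure on Z, ν a Borel probability measure on X, G : Z → X continuous, c : X × X → ℝ continuous and nonnegative, ε > 0, and D₁, D₂ : X → ℝ bounded Borel measurable. Suppose γ is the measure on X × X with density (x,y) ↦ exp((D₁(x)+D₂(y)−c(x,y))/ε) with respect to (G♯ζ)⊗ν, and suppose γ is a coupling in Γ(G♯ζ, ν). Define γ̄ as the measure on Z × X with density (z,y) ↦ exp((D₁(G(z))+D₂(y)−c(G(z),y))/ε) with respect to ζ⊗ν. Then γ̄ is a coupling in Γ(ζ, ν) and (G,id)♯γ̄ = γ, where (G,id)♯γ̄ is the pushforward of γ̄ under (z,y) ↦ (G(z),y). -/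
open MeasureTheory Real

lemma fst_map_withDensity' {A X : Type*} [MeasurableSpace A] [MeasurableSpace X]
    (μ : Measure A) [SFinite μ] (ν : Measure X) [SFinite ν]
    {h : A × X → ENNReal} (hh : Measurable h) :
    ((μ.prod ν).withDensity h).map Prod.fst
      = μ.withDensity (fun a => ∫⁻ y, h (a, y) ∂ν) := by
  ext s hs
  rw [Measure.map_apply measurable_fst hs, withDensity_apply _ (measurable_fst hs),
    withDensity_apply _ hs]
  have hpre : (Prod.fst ⁻¹' s : Set (A × X)) = s ×ˢ Set.univ := by
    ext p; simp
  rw [hpre, ← Measure.prod_restrict, Measure.restrict_univ,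
    MeasureTheory.lintegral_prod _ hh.aemeasurable]

theorem gibbs_plan_pulls_back
    {Z X : Type*} [MetricSpace Z] [CompactSpace Z] [MeasurableSpace Z] [BorelSpace Z]
    [MetricSpace X] [CompactSpace X] [MeasurableSpace X] [BorelSpace X]
    (ζ : Measure Z) [IsProbabilityMeasure ζ] (ν : Measure X) [IsProbabilityMeasure ν]
    (G : Z → X) (hG : Continuous G)
    (c : X × X → ℝ) (hc : Continuous c) (hc0 : ∀ p, 0 ≤ c p)
    (ε : ℝ) (hε : 0 < ε)
    (D₁ D₂ : X → ℝ) (hD₁ : Measurable D₁) (hD₂ : Measurable D₂)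
    (hD₁b : ∃ M, ∀ x, |D₁ x| ≤ M) (hD₂b : ∃ M, ∀ x, |D₂ x| ≤ M)
    (γ : Measure (X × X))
    (hγdef : γ = ((ζ.map G).prod ν).withDensity
      (fun p => ENNReal.ofReal (Real.exp ((D₁ p.1 + D₂ p.2 - c p) / ε))))
    (hγ : IsCoupling γ (ζ.map G) ν)
    (γbar : Measure (Z × X))
    (hγbardef : γbar = (ζ.prod ν).withDensity
      (fun p => ENNReal.ofReal (Real.exp ((D₁ (G p.1) + D₂ p.2 - c (G p.1, p.2)) / ε)))) :
    IsCoupling γbar ζ ν ∧ γbar.map (fun p => (G p.1, p.2)) = γ := by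
  have hGm : Measurable G := hG.measurable
  haveI : IsProbabilityMeasure (ζ.map G) := Measure.isProbabilityMeasure_map hGm.aemeasurable
  set g : X × X → ENNReal :=
    fun p => ENNReal.ofReal (Real.exp ((D₁ p.1 + D₂ p.2 - c p) / ε)) with hg
  have hgm : Measurable g := by
    apply Measurable.ennreal_ofReal
    exact (Real.measurable_exp.comp
      ((((hD₁.comp measurable_fst).add (hD₂.comp measurable_snd)).sub
        hc.measurable).div_const ε))
  set T : Z × X → X × X := fun p => (G p.1, p.2) with hT
  have hTm : Measurable T := (hGm.comp measurable_fst).prodMk measurable_snd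
  have hmap : (ζ.prod ν).map T = (ζ.map G).prod ν := by
    have := Measure.map_prod_map (f := G) (g := id) ζ ν hGm measurable_id
    rw [Measure.map_id] at this
    have hTe : T = Prod.map G id := by funext p; cases p; rfl
    rw [hTe, this]
  have key : γbar.map T = γ := by
    rw [hγbardef, hγdef, ← hmap]
    ext s hs
    rw [Measure.map_apply hTm hs, withDensity_apply _ (hTm hs), withDensity_apply _ hs,
      setLIntegral_map hs hgm hTm]
  -- first marginal of γ
  set k : X → ENNReal := fun x => ∫⁻ y, g (x, y) ∂ν with hk
  have hkm : Measurable k := hgm.lintegral_prod_right'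
  have hwd : (ζ.map G).withDensity k = ζ.map G := by
    have h1 : γ.map Prod.fst = (ζ.map G).withDensity k := by
      rw [hγdef]; exact fst_map_withDensity' _ _ hgm
    rw [← h1, hγ.2.1]
  have hk1 : k =ᵐ[ζ.map G] 1 := by
    have h1 := Measure.rnDeriv_withDensity (ζ.map G) hkm
    rw [hwd] at h1
    exact h1.symm.trans (Measure.rnDeriv_self _)
  have hk1' : (fun z => k (G z)) =ᵐ[ζ] 1 := by
    have hk1'' : ∀ᵐ x ∂(ζ.map G), k x = 1 := hk1
    have hms : MeasurableSet {x : X | k x = 1} := hkm (measurableSet_singleton 1)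
    exact (ae_map_iff hGm.aemeasurable hms).mp hk1''
  have hbarfst : γbar.map Prod.fst = ζ := by
    rw [hγbardef]
    have h2 : Measurable (fun p : Z × X => g (T p)) := hgm.comp hTm
    rw [fst_map_withDensity' ζ ν h2]
    calc ζ.withDensity (fun z => ∫⁻ y, g (T (z, y)) ∂ν)
        = ζ.withDensity 1 := withDensity_congr_ae hk1'
      _ = ζ := by simp
  have hbarsnd : γbar.map Prod.snd = ν := by
    have : γ.map Prod.snd = γbar.map Prod.snd := by
      rw [← key, Measure.map_map measurable_snd hTm]
      rfl
    rw [← hγ.2.2, this]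
  have hprob : IsProbabilityMeasure γbar := by
    constructor
    have h0 := hγ.1.measure_univ
    rw [← key, Measure.map_apply hTm MeasurableSet.univ] at h0
    simpa using h0
  exact ⟨⟨hprob, hbarfst, hbarsnd⟩, key⟩
end

section
/- Let Z and X be compact metric spaces with their Borel σ-algebras, ζ a Borel probability measure on Z, ν a Borel probability measure on X, and c : X × X → ℝ continuous and nonnegative. Then the infimum over continuous maps G : Z → X and couplings γ ∈ Γ(G♯ζ, ν) of ∫_{X×X} c(x,y) dγ(x,y) equals the infimum over continuous maps G : Z → X and couplings γ̄ ∈ Γ(ζ, ν) of ∫_{Z×X} c(G(z),y) dγ̄(z,y). -/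
open MeasureTheory ProbabilityTheory Real

/-!
A coupling `ρ ∈ Γ(ζ, ν)` is pushed forward by `G × id` to a coupling in `Γ(G♯ζ, ν)`, with
`∫ c d((G × id)♯ρ) = ∫ c(G z, y) dρ(z, y)`. Conversely every `γ ∈ Γ(G♯ζ, ν)` arises this way:
disintegrate `γ = G♯ζ ⊗ κ` over its first marginal (possible since `X` is standard Borel) and
take `ρ = ζ ⊗ (κ ∘ G)`. So for each fixed `G` the two inner infima range over the same values.
-/

namespace MeasureTheory.Measure

variable {Z X Y : Type*} [MeasurableSpace Z] [MeasurableSpace X] [MeasurableSpace Y]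

lemma map_prodMap_compProd_comap (μ : Measure Z) [SFinite μ] {G : Z → X} (hG : Measurable G)
    (κ : Kernel X Y) [IsSFiniteKernel κ] :
    (μ ⊗ₘ κ.comap G hG).map (Prod.map G id) = μ.map G ⊗ₘ κ := by
  ext s hs
  rw [map_apply (hG.prodMap measurable_id) hs,
    compProd_apply (hs.preimage (hG.prodMap measurable_id)), compProd_apply hs,
    lintegral_map (Kernel.measurable_kernel_prodMk_left hs) hG]
  rfl

end MeasureTheory.Measure

namespace IsCoupling

variable {Z X Y : Type*} [MeasurableSpace Z] [MeasurableSpace X] [MeasurableSpace Y]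
  {μ : Measure Z} {ν : Measure Y} {G : Z → X}

lemma map_prodMap {γ : Measure (Z × Y)} (hγ : IsCoupling γ μ ν) (hG : Measurable G) :
    IsCoupling (γ.map (Prod.map G id)) (μ.map G) ν := by
  obtain ⟨hprob, hfst, hsnd⟩ := hγ
  have hGid : Measurable (Prod.map G (id : Y → Y)) := hG.prodMap measurable_id
  refine ⟨Measure.isProbabilityMeasure_map hGid.aemeasurable, ?_, ?_⟩
  · rw [Measure.map_map measurable_fst hGid, ← hfst, Measure.map_map hG measurable_fst]
    rfl
  · rw [Measure.map_map measurable_snd hGid, ← hsnd]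
    rfl

lemma exists_map_prodMap_eq [StandardBorelSpace Y] [IsProbabilityMeasure μ] {γ : Measure (X × Y)}
    (hγ : IsCoupling γ (μ.map G) ν) (hG : Measurable G) :
    ∃ ρ : Measure (Z × Y), IsCoupling ρ μ ν ∧ ρ.map (Prod.map G id) = γ := by
  obtain ⟨hprob, hfst, hsnd⟩ := hγ
  have : Nonempty Y := (nonempty_prod.mp (Measure.nonempty_of_neZero γ)).2
  set ρ := μ ⊗ₘ γ.condKernel.comap G hG
  have hdisint : ρ.map (Prod.map G id) = γ := by
    rw [Measure.map_prodMap_compProd_comap μ hG, ← hfst]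
    exact γ.disintegrate γ.condKernel
  have hsnd_map : (ρ.map (Prod.map G id)).map Prod.snd = ρ.map Prod.snd :=
    Measure.map_map measurable_snd (hG.prodMap measurable_id)
  refine ⟨ρ, ⟨inferInstance, Measure.fst_compProd μ _, ?_⟩, hdisint⟩
  rw [← hsnd_map, hdisint, hsnd]

end IsCoupling

theorem minimum_kantorovich_reparameterization_general
    {Z X : Type*} [MetricSpace Z] [MeasurableSpace Z] [BorelSpace Z]
    [MetricSpace X] [CompactSpace X] [MeasurableSpace X] [BorelSpace X]
    (ζ : Measure Z) [IsProbabilityMeasure ζ] (ν : Measure X)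
    (c : X × X → ℝ) (hc : Continuous c) :
    (⨅ G : C(Z, X), ⨅ γ : {γ : Measure (X × X) // IsCoupling γ (ζ.map G) ν},
      ((∫ p, c p ∂γ.1 : ℝ) : EReal))
    =
    ⨅ G : C(Z, X), ⨅ γ : {γ : Measure (Z × X) // IsCoupling γ ζ ν},
      ((∫ p, c (G p.1, p.2) ∂γ.1 : ℝ) : EReal) := by
  refine iInf_congr fun G => ?_
  have hG : Measurable G := G.continuous.measurable
  let push (ρ : {ρ : Measure (Z × X) // IsCoupling ρ ζ ν}) :
      {γ : Measure (X × X) // IsCoupling γ (ζ.map G) ν} :=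
    ⟨ρ.1.map (Prod.map G id), ρ.2.map_prodMap hG⟩
  have hpush : Function.Surjective push := fun γ => by
    obtain ⟨ρ, hρ, hmap⟩ := γ.2.exists_map_prodMap_eq hG
    exact ⟨⟨ρ, hρ⟩, Subtype.ext hmap⟩
  refine (hpush.iInf_congr push fun ρ => ?_).symm
  rw [integral_map (hG.prodMap measurable_id).aemeasurable hc.aestronglyMeasurable]
  rfl

theorem minimum_kantorovich_reparameterization
    {Z X : Type*} [MetricSpace Z] [CompactSpace Z] [MeasurableSpace Z] [BorelSpace Z]
    [MetricSpace X] [CompactSpace X] [MeasurableSpace X] [BorelSpace X]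
    (ζ : Measure Z) [IsProbabilityMeasure ζ] (ν : Measure X) [IsProbabilityMeasure ν]
    (c : X × X → ℝ) (hc : Continuous c) (hc0 : ∀ p, 0 ≤ c p) :
    (⨅ G : C(Z, X), ⨅ γ : {γ : Measure (X × X) // IsCoupling γ (ζ.map G) ν},
      ((∫ p, c p ∂γ.1 : ℝ) : EReal))
    =
    ⨅ G : C(Z, X), ⨅ γ : {γ : Measure (Z × X) // IsCoupling γ ζ ν},
      ((∫ p, c (G p.1, p.2) ∂γ.1 : ℝ) : EReal) :=
  minimum_kantorovich_reparameterization_general ζ ν c hc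
end

section
/- Let X be a compact metric space with its Borel σ-algebra, μ and ν Borel probability measures on X, c : X × X → ℝ continuous and nonnegative, ε > 0, and D : X → ℝ continuous. Define D^{(c,ε)}(x) = −ε·log ∫ exp((D(y)−c(x,y))/ε) dν(y), and let γ̂ be the measure on X × X with density (x,y) ↦ exp((D^{(c,ε)}(x)+D(y)−c(x,y))/ε) with respect to μ⊗ν. Then γ̂ is a probability measure and its first marginal equals μ. -/
open MeasureTheory Real

theorem gibbs_plan_first_marginal
    {X : Type*} [MetricSpace X] [CompactSpace X] [MeasurableSpace X] [BorelSpace X]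
    (μ ν : Measure X) [IsProbabilityMeasure μ] [IsProbabilityMeasure ν]
    (c : X × X → ℝ) (hc : Continuous c) (hc0 : ∀ p, 0 ≤ c p)
    (ε : ℝ) (hε : 0 < ε)
    (D : X → ℝ) (hD : Continuous D)
    (Dce : X → ℝ)
    (hDce : ∀ x, Dce x = -ε * Real.log (∫ y, Real.exp ((D y - c (x, y)) / ε) ∂ν))
    (γhat : Measure (X × X))
    (hγhat : γhat = (μ.prod ν).withDensity
      (fun p => ENNReal.ofReal (Real.exp ((Dce p.1 + D p.2 - c p) / ε)))) :
    IsProbabilityMeasure γhat ∧ γhat.map Prod.fst = μ := by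
  have hne : Nonempty X := by
    by_contra h
    rw [not_nonempty_iff] at h
    have h1 : μ Set.univ = 1 := measure_univ
    simp [Set.univ_eq_empty_iff.mpr h] at h1
  -- the inner function
  set f : X × X → ℝ := fun p => Real.exp ((D p.2 - c p) / ε) with hf
  have hfc : Continuous f :=
    Real.continuous_exp.comp (((hD.comp continuous_snd).sub hc).div_const ε)
  have hfpos : ∀ p, 0 < f p := fun p => Real.exp_pos _
  -- lower bound on f
  obtain ⟨p₀, -, hmin⟩ := isCompact_univ.exists_isMinOn (Set.univ_nonempty)
    hfc.continuousOn
  have hmin' : ∀ p : X × X, f p₀ ≤ f p := fun p => hmin (Set.mem_univ p)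
  -- upper bound on f
  obtain ⟨p₁, -, hmax⟩ := isCompact_univ.exists_isMaxOn (Set.univ_nonempty)
    hfc.continuousOn
  have hmax' : ∀ p : X × X, f p ≤ f p₁ := fun p => hmax (Set.mem_univ p)
  -- integrability of slices
  have hint : ∀ x : X, Integrable (fun y => f (x, y)) ν := by
    intro x
    exact (hfc.comp (Continuous.prodMk_right x)).integrable_of_hasCompactSupport
      (isClosed_tsupport _).isCompact
  -- the normalization function
  set g : X → ℝ := fun x => ∫ y, f (x, y) ∂ν with hg
  have hgpos : ∀ x, 0 < g x := by
    intro x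
    have h1 : f p₀ ≤ g x := by
      have := integral_mono (integrable_const (f p₀)) (hint x)
        (fun y => hmin' (x, y))
      simpa using this
    exact lt_of_lt_of_le (hfpos p₀) h1
  -- continuity of g
  have hgc : Continuous g := by
    apply continuous_of_dominated
      (F := fun x y => f (x, y)) (bound := fun _ => f p₁)
    · intro x
      exact (hfc.comp (Continuous.prodMk_right x)).aestronglyMeasurable
    · intro x
      filter_upwards with y
      rw [Real.norm_eq_abs, abs_of_pos (hfpos _)]
      exact hmax' _
    · exact integrable_const _
    · filter_upwards with y
      exact hfc.comp (continuous_id.prodMk continuous_const)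
  -- Dce is continuous
  have hDcec : Continuous Dce := by
    have : Dce = fun x => -ε * Real.log (g x) := funext hDce
    rw [this]
    exact continuous_const.mul (hgc.log (fun x => (hgpos x).ne'))
  -- exp(Dce x / ε) = (g x)⁻¹
  have hexp : ∀ x, Real.exp (Dce x / ε) = (g x)⁻¹ := by
    intro x
    rw [hDce x]
    rw [show -ε * Real.log (g x) / ε = -Real.log (g x) by field_simp]
    rw [Real.exp_neg, Real.exp_log (hgpos x)]
  -- the density
  set ρ : X × X → ENNReal :=
    fun p => ENNReal.ofReal (Real.exp ((Dce p.1 + D p.2 - c p) / ε)) with hρ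
  have hρc : Continuous fun p : X × X => Real.exp ((Dce p.1 + D p.2 - c p) / ε) :=
    Real.continuous_exp.comp
      ((((hDcec.comp continuous_fst).add (hD.comp continuous_snd)).sub hc).div_const ε)
  have hρm : Measurable ρ := ENNReal.measurable_ofReal.comp hρc.measurable
  -- key: for each x the fiber lintegral is 1
  have key : ∀ x, ∫⁻ y, ρ (x, y) ∂ν = 1 := by
    intro x
    have h1 : ∀ y, ρ (x, y) = ENNReal.ofReal ((g x)⁻¹) * ENNReal.ofReal (f (x, y)) := by
      intro y
      rw [hρ]
      simp only
      rw [show (Dce x + D y - c (x, y)) / ε = Dce x / ε + (D y - c (x, y)) / ε by ring,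
        Real.exp_add, hexp x, ENNReal.ofReal_mul (inv_nonneg.mpr (hgpos x).le)]
    simp_rw [h1]
    rw [lintegral_const_mul' _ _ ENNReal.ofReal_ne_top]
    rw [← ofReal_integral_eq_lintegral_ofReal (hint x)
      (Filter.Eventually.of_forall fun y => (hfpos (x, y)).le)]
    rw [← ENNReal.ofReal_mul (inv_nonneg.mpr (hgpos x).le)]
    rw [inv_mul_cancel₀ (hgpos x).ne']
    exact ENNReal.ofReal_one
  have hρae : AEMeasurable ρ (μ.prod ν) := hρm.aemeasurable
  constructor
  · constructor
    rw [hγhat]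
    rw [withDensity_apply _ MeasurableSet.univ, Measure.restrict_univ]
    rw [lintegral_prod _ hρae]
    simp_rw [key]
    simp
  · rw [hγhat]
    ext s hs
    rw [Measure.map_apply measurable_fst hs]
    have hps : Prod.fst ⁻¹' s = s ×ˢ (Set.univ : Set X) := by
      ext p; simp
    rw [hps, withDensity_apply _ (hs.prod MeasurableSet.univ)]
    rw [← Measure.prod_restrict s Set.univ, Measure.restrict_univ]
    rw [lintegral_prod _ hρm.aemeasurable]
    simp_rw [key]
    simp [Measure.restrict_apply_univ]
end

section
/- Let Z and X be compact metric spaces with their Borel σ-algebras, ζ a Borel probability measure on Z, G : Z → X continuous, c : X × X → ℝ continuous and nonnegative, and ε > 0. Then inf over η ∈ Γ(G♯ζ, G♯ζ) of [∫_{X×X} c dη + ε·KL(η ‖ (G♯ζ)⊗(G♯ζ))] equals inf over η̄ ∈ Γ(ζ, ζ) of [∫_{Z×Z} c(G(z'),G(z'')) dη̄(z',z'') + ε·KL((G,G)♯η̄ ‖ (G♯ζ)⊗(G♯ζ))], where (G,G)♯η̄ is the pushforward of η̄ under (z',z'') ↦ (G(z'),G(z'')). -/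
open MeasureTheory Real

/-!
Pushing a coupling of `ζ` with itself forward by `G × G` gives a coupling of `G♯ζ` with itself
with the same cost and the same KL term, so it suffices that every coupling `η` of `G♯ζ` with
itself arises this way. Disintegrating `ζ` along `G` gives a Markov kernel `κ` with
`κ ∘ (G♯ζ) = ζ` and `G♯(κ x) = δ_x` for `G♯ζ`-a.e. `x` (since `Z` is standard Borel); then
`(κ ∥ κ) ∘ η` is a coupling of `ζ` with itself whose pushforward by `G × G` is `η`.
-/

open ProbabilityTheory

lemma IsCoupling.map_prodMap_s12 {A B C D : Type*} [MeasurableSpace A] [MeasurableSpace B]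
    [MeasurableSpace C] [MeasurableSpace D] {γ : Measure (A × B)} {μ : Measure A} {ν : Measure B}
    (h : IsCoupling γ μ ν) {f : A → C} {g : B → D} (hf : Measurable f) (hg : Measurable g) :
    IsCoupling (γ.map (Prod.map f g)) (μ.map f) (ν.map g) := by
  obtain ⟨hγ, hfst, hsnd⟩ := h
  refine ⟨Measure.isProbabilityMeasure_map (hf.prodMap hg).aemeasurable, ?_, ?_⟩
  · rw [Measure.map_map measurable_fst (hf.prodMap hg), ← hfst,
      Measure.map_map hf measurable_fst]
    rfl
  · rw [Measure.map_map measurable_snd (hf.prodMap hg), ← hsnd,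
      Measure.map_map hg measurable_snd]
    rfl

lemma Measure.map_eq_dirac_of_ae_eq {A B : Type*} [MeasurableSpace A] [MeasurableSpace B]
    {ν : Measure A} [IsProbabilityMeasure ν] {f : A → B} {b : B} (h : ∀ᵐ a ∂ν, f a = b) :
    ν.map f = Measure.dirac b := by
  rw [Measure.map_congr h, Measure.map_const, measure_univ, one_smul]

lemma Measure.fst_parallelComp_comp {X Y Z W : Type*} [MeasurableSpace X] [MeasurableSpace Y]
    [MeasurableSpace Z] [MeasurableSpace W] (η : Measure (X × Y))
    (κ : Kernel X Z) [IsSFiniteKernel κ] (ξ : Kernel Y W) [IsMarkovKernel ξ] :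
    ((κ ∥ₖ ξ) ∘ₘ η).fst = κ ∘ₘ η.fst := by
  ext s hs
  rw [Measure.fst_apply hs, Measure.bind_apply (measurable_fst hs) (Kernel.aemeasurable _),
    Measure.bind_apply hs κ.aemeasurable, Measure.fst,
    lintegral_map (κ.measurable_coe hs) measurable_fst]
  congr with p
  rw [Kernel.parallelComp_apply, ← Set.prod_univ, Measure.prod_prod, measure_univ, mul_one]

lemma Measure.snd_parallelComp_comp {X Y Z W : Type*} [MeasurableSpace X] [MeasurableSpace Y]
    [MeasurableSpace Z] [MeasurableSpace W] (η : Measure (X × Y))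
    (κ : Kernel X Z) [IsMarkovKernel κ] (ξ : Kernel Y W) [IsSFiniteKernel ξ] :
    ((κ ∥ₖ ξ) ∘ₘ η).snd = ξ ∘ₘ η.snd := by
  ext s hs
  rw [Measure.snd_apply hs, Measure.bind_apply (measurable_snd hs) (Kernel.aemeasurable _),
    Measure.bind_apply hs ξ.aemeasurable, Measure.snd,
    lintegral_map (ξ.measurable_coe hs) measurable_snd]
  congr with p
  rw [Kernel.parallelComp_apply, ← Set.univ_prod, Measure.prod_prod, measure_univ, one_mul]

section FiberKernel

variable {Z X : Type*} [MeasurableSpace Z] [StandardBorelSpace Z] [Nonempty Z]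
  [MeasurableSpace X] (μ : Measure Z) [IsFiniteMeasure μ]

noncomputable def fiberKernel (f : Z → X) : Kernel X Z :=
  (μ.map fun z => (f z, z)).condKernel

variable {f : Z → X}

instance : IsMarkovKernel (fiberKernel μ f) := by
  unfold fiberKernel; infer_instance

lemma compProd_fiberKernel :
    μ.map f ⊗ₘ fiberKernel μ f = μ.map fun z => (f z, z) := by
  rw [← Measure.fst_map_prodMk (X := f) (Y := fun z => z) measurable_id]
  exact Measure.disintegrate _ (Measure.condKernel _)

lemma fiberKernel_comp_map (hf : Measurable f) : fiberKernel μ f ∘ₘ μ.map f = μ := by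
  rw [← Measure.snd_compProd, compProd_fiberKernel μ, Measure.snd_map_prodMk hf,
    Measure.map_id']

lemma ae_map_fiberKernel_eq_dirac [MeasurableEq X] (hf : Measurable f) :
    ∀ᵐ x ∂μ.map f, (fiberKernel μ f x).map f = Measure.dirac x := by
  have hgraph : ∀ᵐ p ∂(μ.map fun z => (f z, z)), f p.2 = p.1 :=
    (ae_map_iff (hf.prodMk measurable_id).aemeasurable
      (measurableSet_eq_fun (hf.comp measurable_snd) measurable_fst)).2 (ae_of_all _ fun _ => rfl)
  rw [← compProd_fiberKernel μ] at hgraph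
  filter_upwards [Measure.ae_ae_of_ae_compProd hgraph] with x hx
  exact Measure.map_eq_dirac_of_ae_eq hx

end FiberKernel

lemma IsCoupling.exists_map_prodMap_eq_s12 {Z W X Y : Type*} [MeasurableSpace Z]
    [StandardBorelSpace Z] [MeasurableSpace W] [StandardBorelSpace W] [MeasurableSpace X]
    [MeasurableEq X] [MeasurableSpace Y] [MeasurableEq Y]
    {μ : Measure Z} [IsProbabilityMeasure μ] {ν : Measure W} [IsProbabilityMeasure ν]
    {f : Z → X} {g : W → Y} (hf : Measurable f) (hg : Measurable g) {η : Measure (X × Y)}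
    (hη : IsCoupling η (μ.map f) (ν.map g)) :
    ∃ η' : Measure (Z × W), IsCoupling η' μ ν ∧ η'.map (Prod.map f g) = η := by
  have := nonempty_of_isProbabilityMeasure μ
  have := nonempty_of_isProbabilityMeasure ν
  obtain ⟨hη, hfst, hsnd⟩ := hη
  refine ⟨(fiberKernel μ f ∥ₖ fiberKernel ν g) ∘ₘ η, ⟨inferInstance, ?_, ?_⟩, ?_⟩
  · rw [← Measure.fst, Measure.fst_parallelComp_comp, Measure.fst, hfst,
      fiberKernel_comp_map μ hf]
  · rw [← Measure.snd, Measure.snd_parallelComp_comp, Measure.snd, hsnd,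
      fiberKernel_comp_map ν hg]
  have hdirac₁ : ∀ᵐ p ∂η, (fiberKernel μ f p.1).map f = Measure.dirac p.1 := by
    have := ae_map_fiberKernel_eq_dirac μ hf
    rw [← hfst] at this
    exact ae_of_ae_map measurable_fst.aemeasurable this
  have hdirac₂ : ∀ᵐ p ∂η, (fiberKernel ν g p.2).map g = Measure.dirac p.2 := by
    have := ae_map_fiberKernel_eq_dirac ν hg
    rw [← hsnd] at this
    exact ae_of_ae_map measurable_snd.aemeasurable this
  calc ((fiberKernel μ f ∥ₖ fiberKernel ν g) ∘ₘ η).map (Prod.map f g)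
      = (fiberKernel μ f ∥ₖ fiberKernel ν g).map (Prod.map f g) ∘ₘ η :=
        Measure.map_comp _ _ (hf.prodMap hg)
    _ = Kernel.id ∘ₘ η := Measure.comp_congr ?_
    _ = η := Measure.id_comp
  filter_upwards [hdirac₁, hdirac₂] with p hp₁ hp₂
  rw [Kernel.map_apply _ (hf.prodMap hg), Kernel.parallelComp_apply,
    ← Measure.map_prod_map _ _ hf hg, hp₁, hp₂, Measure.dirac_prod_dirac, Kernel.id_apply]

theorem debias_term_reparameterization_general
    {Z X : Type*} [MetricSpace Z] [CompactSpace Z] [MeasurableSpace Z] [BorelSpace Z]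
    [MetricSpace X] [CompactSpace X] [MeasurableSpace X] [BorelSpace X]
    (ζ : Measure Z) [IsProbabilityMeasure ζ]
    (G : Z → X) (hG : Continuous G)
    (c : X × X → ℝ) (hc : Continuous c)
    (ε : ℝ) :
    (⨅ η : {η : Measure (X × X) // IsCoupling η (ζ.map G) (ζ.map G)},
      ((∫ p, c p ∂η.1 : ℝ) : EReal) + (ε : EReal) * KL η.1 ((ζ.map G).prod (ζ.map G)))
    =
    ⨅ η : {η : Measure (Z × Z) // IsCoupling η ζ ζ},
      ((∫ p, c (G p.1, G p.2) ∂η.1 : ℝ) : EReal)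
        + (ε : EReal) * KL (η.1.map (fun p => (G p.1, G p.2)))
            ((ζ.map G).prod (ζ.map G)) := by
  have hGG := hG.measurable.prodMap hG.measurable
  let pushforward (η : {η : Measure (Z × Z) // IsCoupling η ζ ζ}) :
      {η : Measure (X × X) // IsCoupling η (ζ.map G) (ζ.map G)} :=
    ⟨η.1.map (Prod.map G G), η.2.map_prodMap_s12 hG.measurable hG.measurable⟩
  have hsurj : Function.Surjective pushforward := fun η => by
    obtain ⟨η', hη', hmap⟩ := η.2.exists_map_prodMap_eq_s12 hG.measurable hG.measurable
    exact ⟨⟨η', hη'⟩, Subtype.ext hmap⟩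
  rw [← hsurj.iInf_comp]
  refine iInf_congr fun η => ?_
  simp only [pushforward, integral_map hGG.aemeasurable hc.aestronglyMeasurable]
  rfl

theorem debias_term_reparameterization
    {Z X : Type*} [MetricSpace Z] [CompactSpace Z] [MeasurableSpace Z] [BorelSpace Z]
    [MetricSpace X] [CompactSpace X] [MeasurableSpace X] [BorelSpace X]
    (ζ : Measure Z) [IsProbabilityMeasure ζ]
    (G : Z → X) (hG : Continuous G)
    (c : X × X → ℝ) (hc : Continuous c) (hc0 : ∀ p, 0 ≤ c p)
    (ε : ℝ) (hε : 0 < ε) :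
    (⨅ η : {η : Measure (X × X) // IsCoupling η (ζ.map G) (ζ.map G)},
      ((∫ p, c p ∂η.1 : ℝ) : EReal) + (ε : EReal) * KL η.1 ((ζ.map G).prod (ζ.map G)))
    =
    ⨅ η : {η : Measure (Z × Z) // IsCoupling η ζ ζ},
      ((∫ p, c (G p.1, G p.2) ∂η.1 : ℝ) : EReal)
        + (ε : EReal) * KL (η.1.map (fun p => (G p.1, G p.2)))
            ((ζ.map G).prod (ζ.map G)) :=
  debias_term_reparameterization_general ζ G hG c hc ε
end

section
/- Let X be a compact metric space with its Borel σ-algebra, μ and ν Borel probability measures on X, and c : X × X → ℝ continuous and nonnegative. Then the entropically smoothed optimal transport cost converges to the unregularized optimal transport cost as the regularization vanishes: lim_{ε → 0⁺} W_{c,ε}(μ,ν) = W_c(μ,ν), where W_{c,ε}(μ,ν) = inf_{γ ∈ Γ(μ,ν)} [∫ c dγ + ε·KL(γ‖μ⊗ν)] and W_c(μ,ν) = inf_{γ ∈ Γ(μ,ν)} ∫ c dγ. -/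
/-!
Since `KL ≥ 0` (Gibbs' inequality), every smoothed cost is at least the unsmoothed one.
Conversely, fix a coupling `γ` and `η > 0`. By uniform continuity, `X` has a finite measurable
partition `(A i)` such that `c` oscillates by at most `η` on each block `A i ×ˢ A j`. Replacing `γ`
on each block by `γ (A i ×ˢ A j)` times the product of the normalised restrictions of `μ` to `A i`
and of `ν` to `A j` keeps the marginals and the block masses, so it costs at most `η` more. The new
coupling is absolutely continuous (with bounded density) with respect to `μ ⊗ ν`, so its `KL` is a
finite `K`, and its smoothed cost is then at most `∫ c ∂γ + η + ε K`, which tends to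
`∫ c ∂γ + η` as `ε → 0`.
-/

open MeasureTheory Real

open ProbabilityTheory Set Filter Topology Function

structure IsMeasurablePartition {α ι : Type*} [MeasurableSpace α] (A : ι → Set α) : Prop where
  measurableSet : ∀ i, MeasurableSet (A i)
  pairwise_disjoint : Pairwise (Disjoint on A)
  iUnion_eq : ⋃ i, A i = univ

theorem isMeasurablePartition_disjointed {α ι : Type*} [MeasurableSpace α] [LinearOrder ι]
    [LocallyFiniteOrderBot ι] [Countable ι] {B : ι → Set α} (hB : ∀ i, MeasurableSet (B i))
    (hcov : ⋃ i, B i = univ) : IsMeasurablePartition (disjointed B) where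
  measurableSet i := by
    rw [disjointed_eq_inter_compl]
    exact (hB i).inter (.iInter fun j => .iInter fun _ => (hB j).compl)
  pairwise_disjoint := disjoint_disjointed B
  iUnion_eq := iUnion_disjointed.trans hcov

namespace IsMeasurablePartition

variable {α β ι κ : Type*} [MeasurableSpace α] [MeasurableSpace β] {A : ι → Set α}
  {B : κ → Set β}

theorem exists_mem (hA : IsMeasurablePartition A) (x : α) : ∃ i, x ∈ A i :=
  mem_iUnion.1 (hA.iUnion_eq ▸ mem_univ x)

theorem preimage (hA : IsMeasurablePartition A) {f : β → α} (hf : Measurable f) :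
    IsMeasurablePartition fun i => f ⁻¹' A i where
  measurableSet i := hf (hA.measurableSet i)
  pairwise_disjoint _ _ hij := (hA.pairwise_disjoint hij).preimage f
  iUnion_eq := by rw [← preimage_iUnion, hA.iUnion_eq, preimage_univ]

theorem prod (hA : IsMeasurablePartition A) (hB : IsMeasurablePartition B) :
    IsMeasurablePartition fun p : ι × κ => A p.1 ×ˢ B p.2 where
  measurableSet p := (hA.measurableSet p.1).prod (hB.measurableSet p.2)
  pairwise_disjoint p q hpq := by
    refine disjoint_prod.2 ?_
    by_cases h : p.1 = q.1
    · exact Or.inr (hB.pairwise_disjoint fun h' => hpq (Prod.ext h h'))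
    · exact Or.inl (hA.pairwise_disjoint h)
  iUnion_eq := eq_univ_of_forall fun z => by
    obtain ⟨i, hi⟩ := hA.exists_mem z.1
    obtain ⟨j, hj⟩ := hB.exists_mem z.2
    exact mem_iUnion.2 ⟨(i, j), hi, hj⟩

theorem cond_apply_of_ne (hA : IsMeasurablePartition A) (μ : Measure α) {i k : ι} (h : k ≠ i) :
    μ[A i | A k] = 0 := by
  rw [cond_apply (hA.measurableSet k), (hA.pairwise_disjoint h).inter_eq, measure_empty, mul_zero]

variable [Fintype ι]

theorem sum_restrict (hA : IsMeasurablePartition A) (μ : Measure α) :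
    ∑ i, μ.restrict (A i) = μ := by
  rw [← Measure.sum_fintype, ← Measure.restrict_iUnion hA.pairwise_disjoint hA.measurableSet,
    hA.iUnion_eq, Measure.restrict_univ]

theorem sum_measure_inter (hA : IsMeasurablePartition A) (μ : Measure α) (s : Set α) :
    ∑ i, μ (s ∩ A i) = μ s := by
  conv_rhs => rw [← hA.sum_restrict μ]
  simp [Measure.restrict_apply' (hA.measurableSet _)]

theorem sum_measureReal (hA : IsMeasurablePartition A) (μ : Measure α) [IsFiniteMeasure μ] :
    ∑ i, μ.real (A i) = μ.real univ := by
  rw [← hA.iUnion_eq, measureReal_iUnion_fintype hA.pairwise_disjoint hA.measurableSet]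

theorem sum_smul_cond (hA : IsMeasurablePartition A) (μ : Measure α) [IsFiniteMeasure μ] :
    ∑ i, μ (A i) • μ[|A i] = μ := by
  conv_rhs => rw [← hA.sum_restrict μ]
  refine Finset.sum_congr rfl fun i _ => ?_
  rcases eq_or_ne (μ (A i)) 0 with h0 | h0
  · rw [h0, zero_smul, Measure.restrict_eq_zero.2 h0]
  · rw [ProbabilityTheory.cond, smul_smul, ENNReal.mul_inv_cancel h0 (measure_ne_top _ _), one_smul]

theorem integral_eq_sum_setIntegral (hA : IsMeasurablePartition A) {μ : Measure α}
    {f : α → ℝ} (hf : Integrable f μ) : ∫ x, f x ∂μ = ∑ i, ∫ x in A i, f x ∂μ := by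
  rw [← integral_iUnion_fintype hA.measurableSet hA.pairwise_disjoint fun _ => hf.integrableOn,
    hA.iUnion_eq, setIntegral_univ]

theorem integral_le_integral_add (hA : IsMeasurablePartition A) {ρ ρ' : Measure α}
    [IsFiniteMeasure ρ] [IsFiniteMeasure ρ'] (hρ : ∀ i, ρ' (A i) = ρ (A i)) {f : α → ℝ}
    (hf : Integrable f ρ) (hf' : Integrable f ρ') {η : ℝ}
    (hosc : ∀ i, ∃ a, MapsTo f (A i) (Icc a (a + η))) :
    ∫ x, f x ∂ρ' ≤ ∫ x, f x ∂ρ + η * ρ.real univ := by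
  rw [hA.integral_eq_sum_setIntegral hf, hA.integral_eq_sum_setIntegral hf',
    ← hA.sum_measureReal, Finset.mul_sum, ← Finset.sum_add_distrib]
  refine Finset.sum_le_sum fun i _ => ?_
  obtain ⟨a, ha⟩ := hosc i
  have hreal : ρ'.real (A i) = ρ.real (A i) := by simp only [measureReal_def, hρ i]
  calc ∫ x in A i, f x ∂ρ' ≤ ∫ _ in A i, a + η ∂ρ' :=
        setIntegral_mono_on hf'.integrableOn (integrableOn_const (measure_ne_top _ _))
          (hA.measurableSet i) fun x hx => (ha hx).2
    _ = a * ρ.real (A i) + η * ρ.real (A i) := by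
        rw [setIntegral_const, hreal, smul_eq_mul]; ring
    _ ≤ ∫ x in A i, f x ∂ρ + η * ρ.real (A i) := by
        gcongr
        exact setIntegral_ge_of_const_le_real (hA.measurableSet i) (measure_ne_top _ _)
          (fun x hx => (ha hx).1) hf.integrableOn

end IsMeasurablePartition

namespace IsCoupling

variable {α β ι κ : Type*} [MeasurableSpace α] [MeasurableSpace β] {γ : Measure (α × β)}
  {μ : Measure α} {ν : Measure β} {s : Set α} {t : Set β}

theorem isProbabilityMeasure_left (h : IsCoupling γ μ ν) : IsProbabilityMeasure μ :=
  have := h.1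
  h.2.1 ▸ Measure.isProbabilityMeasure_map measurable_fst.aemeasurable

theorem isProbabilityMeasure_right (h : IsCoupling γ μ ν) : IsProbabilityMeasure ν :=
  have := h.1
  h.2.2 ▸ Measure.isProbabilityMeasure_map measurable_snd.aemeasurable

theorem measure_prod_univ (h : IsCoupling γ μ ν) (hs : MeasurableSet s) :
    γ (s ×ˢ univ) = μ s := by
  rw [← h.2.1, Measure.map_apply measurable_fst hs, prod_univ]

theorem measure_univ_prod (h : IsCoupling γ μ ν) (ht : MeasurableSet t) :
    γ (univ ×ˢ t) = ν t := by
  rw [← h.2.2, Measure.map_apply measurable_snd ht, univ_prod]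

theorem measure_prod_eq_zero_left (h : IsCoupling γ μ ν) (hs : MeasurableSet s) (h0 : μ s = 0) :
    γ (s ×ˢ t) = 0 :=
  measure_mono_null (prod_mono subset_rfl (subset_univ t)) (h.measure_prod_univ hs ▸ h0)

theorem measure_prod_eq_zero_right (h : IsCoupling γ μ ν) (ht : MeasurableSet t) (h0 : ν t = 0) :
    γ (s ×ˢ t) = 0 :=
  measure_mono_null (prod_mono (subset_univ s) subset_rfl) (h.measure_univ_prod ht ▸ h0)

variable [Fintype ι] [Fintype κ] {A : ι → Set α} {B : κ → Set β}

theorem sum_measure_prod_right (h : IsCoupling γ μ ν) (hB : IsMeasurablePartition B)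
    (hs : MeasurableSet s) : ∑ j, γ (s ×ˢ B j) = μ s := by
  rw [← h.measure_prod_univ hs, ← (hB.preimage measurable_snd).sum_measure_inter]
  congr! 2 with j
  ext; simp

theorem sum_measure_prod_left (h : IsCoupling γ μ ν) (hA : IsMeasurablePartition A)
    (ht : MeasurableSet t) : ∑ i, γ (A i ×ˢ t) = ν t := by
  rw [← h.measure_univ_prod ht, ← (hA.preimage measurable_fst).sum_measure_inter]
  congr! 2 with i
  ext; simp [and_comm]

end IsCoupling

section BlockCoupling

variable {α β ι κ : Type*} [MeasurableSpace α] [MeasurableSpace β] [Fintype ι] [Fintype κ]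

noncomputable def blockCoupling (A : ι → Set α) (B : κ → Set β) (γ : Measure (α × β))
    (μ : Measure α) (ν : Measure β) : Measure (α × β) :=
  ∑ i, ∑ j, γ (A i ×ˢ B j) • (μ[|A i]).prod (ν[|B j])

variable {A : ι → Set α} {B : κ → Set β} {γ : Measure (α × β)} {μ : Measure α} {ν : Measure β}

theorem blockCoupling_absolutelyContinuous [SFinite ν] :
    blockCoupling A B γ μ ν ≪ μ.prod ν := by
  refine Measure.AbsolutelyContinuous.mk fun s _ hs => ?_
  simp only [blockCoupling, Measure.coe_finsetSum, Finset.sum_apply, Measure.smul_apply,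
    smul_eq_mul, (cond_absolutelyContinuous.prod cond_absolutelyContinuous) hs, mul_zero,
    Finset.sum_const_zero]

theorem IsCoupling.map_fst_smul_cond_prod [IsFiniteMeasure ν] (h : IsCoupling γ μ ν)
    {s : Set α} {t : Set β} (ht : MeasurableSet t) :
    (γ (s ×ˢ t) • (μ[|s]).prod (ν[|t])).map Prod.fst = γ (s ×ˢ t) • μ[|s] := by
  rw [Measure.map_smul, Measure.map_fst_prod]
  rcases eq_or_ne (ν t) 0 with h0 | h0
  · simp [h.measure_prod_eq_zero_right ht h0]
  · have := cond_isProbabilityMeasure h0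
    simp

theorem IsCoupling.map_snd_smul_cond_prod [IsFiniteMeasure μ] (h : IsCoupling γ μ ν)
    {s : Set α} {t : Set β} (hs : MeasurableSet s) :
    (γ (s ×ˢ t) • (μ[|s]).prod (ν[|t])).map Prod.snd = γ (s ×ˢ t) • ν[|t] := by
  rw [Measure.map_smul, Measure.map_snd_prod]
  rcases eq_or_ne (μ s) 0 with h0 | h0
  · simp [h.measure_prod_eq_zero_left hs h0]
  · have := cond_isProbabilityMeasure h0
    simp

variable [IsFiniteMeasure μ] [IsFiniteMeasure ν] (hA : IsMeasurablePartition A)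
  (hB : IsMeasurablePartition B) (hγ : IsCoupling γ μ ν)
include hA hB hγ

theorem map_fst_blockCoupling : (blockCoupling A B γ μ ν).map Prod.fst = μ := by
  simp_rw [blockCoupling, Measure.map_finset_sum' measurable_fst.aemeasurable,
    hγ.map_fst_smul_cond_prod (hB.measurableSet _), ← Finset.sum_smul,
    hγ.sum_measure_prod_right hB (hA.measurableSet _), hA.sum_smul_cond]

theorem map_snd_blockCoupling : (blockCoupling A B γ μ ν).map Prod.snd = ν := by
  simp_rw [blockCoupling, Measure.map_finset_sum' measurable_snd.aemeasurable,
    hγ.map_snd_smul_cond_prod (hA.measurableSet _)]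
  rw [Finset.sum_comm]
  simp_rw [← Finset.sum_smul, hγ.sum_measure_prod_left hA (hB.measurableSet _), hB.sum_smul_cond]

theorem isCoupling_blockCoupling : IsCoupling (blockCoupling A B γ μ ν) μ ν := by
  have hfst := map_fst_blockCoupling hA hB hγ
  have : IsProbabilityMeasure ((blockCoupling A B γ μ ν).map Prod.fst) :=
    hfst.symm ▸ hγ.isProbabilityMeasure_left
  exact ⟨Measure.isProbabilityMeasure_of_map Prod.fst, hfst, map_snd_blockCoupling hA hB hγ⟩

theorem blockCoupling_apply_prod (i : ι) (j : κ) :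
    blockCoupling A B γ μ ν (A i ×ˢ B j) = γ (A i ×ˢ B j) := by
  simp only [blockCoupling, Measure.coe_finsetSum, Finset.sum_apply, Measure.smul_apply,
    smul_eq_mul, Measure.prod_prod]
  rw [Finset.sum_eq_single i (fun k _ hk => by simp [hA.cond_apply_of_ne μ hk]) (by simp),
    Finset.sum_eq_single j (fun l _ hl => by simp [hB.cond_apply_of_ne ν hl]) (by simp)]
  rcases eq_or_ne (μ (A i)) 0 with hμ | hμ
  · simp [hγ.measure_prod_eq_zero_left (hA.measurableSet i) hμ]
  rcases eq_or_ne (ν (B j)) 0 with hν | hν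
  · simp [hγ.measure_prod_eq_zero_right (hB.measurableSet j) hν]
  simp [hμ, hν]

end BlockCoupling

theorem exists_isMeasurablePartition_dist_lt {X : Type*} [PseudoMetricSpace X] [CompactSpace X]
    [MeasurableSpace X] [OpensMeasurableSpace X] {δ : ℝ} (hδ : 0 < δ) :
    ∃ (n : ℕ) (A : Fin n → Set X), IsMeasurablePartition A ∧
      ∀ i, ∀ x ∈ A i, ∀ y ∈ A i, dist x y < δ := by
  obtain ⟨t, -, ht, hcov⟩ := finite_cover_balls_of_compact (isCompact_univ (X := X)) (half_pos hδ)
  obtain ⟨n, e, rfl⟩ := ht.fin_embedding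
  refine ⟨n, disjointed fun i => Metric.ball (e i) (δ / 2),
    isMeasurablePartition_disjointed (fun _ => measurableSet_ball) ?_, fun i x hx y hy => ?_⟩
  · simpa [eq_univ_iff_forall] using hcov
  · calc dist x y ≤ dist x (e i) + dist y (e i) := dist_triangle_right _ _ _
      _ < δ / 2 + δ / 2 := add_lt_add (disjointed_subset _ i hx) (disjointed_subset _ i hy)
      _ = δ := add_halves δ

theorem exists_isMeasurablePartition_mapsTo_Icc {X Y : Type*} [PseudoMetricSpace X]
    [CompactSpace X] [MeasurableSpace X] [OpensMeasurableSpace X] [PseudoMetricSpace Y]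
    [CompactSpace Y] [MeasurableSpace Y] [OpensMeasurableSpace Y] {f : X × Y → ℝ}
    (hf : Continuous f) {η : ℝ} (hη : 0 < η) :
    ∃ (m n : ℕ) (A : Fin m → Set X) (B : Fin n → Set Y), IsMeasurablePartition A ∧
      IsMeasurablePartition B ∧ ∀ i j, ∃ a, MapsTo f (A i ×ˢ B j) (Icc a (a + η)) := by
  obtain ⟨δ, hδ, hfδ⟩ := Metric.uniformContinuous_iff.1
    (CompactSpace.uniformContinuous_of_continuous hf) (η / 2) (half_pos hη)
  obtain ⟨m, A, hA, hAδ⟩ := exists_isMeasurablePartition_dist_lt (X := X) hδ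
  obtain ⟨n, B, hB, hBδ⟩ := exists_isMeasurablePartition_dist_lt (X := Y) hδ
  refine ⟨m, n, A, B, hA, hB, fun i j => ?_⟩
  rcases (A i ×ˢ B j).eq_empty_or_nonempty with h | ⟨z, hz⟩
  · exact ⟨0, h ▸ mapsTo_empty _ _⟩
  refine ⟨f z - η / 2, fun p hp => ?_⟩
  have hpz : dist (f p) (f z) < η / 2 :=
    hfδ (Prod.dist_eq (x := p) (y := z) ▸ max_lt (hAδ i _ hp.1 _ hz.1) (hBδ j _ hp.2 _ hz.2))
  rw [Real.dist_eq, abs_lt] at hpz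
  constructor <;> linarith

theorem IsCoupling.exists_absolutelyContinuous_integral_le {X Y : Type*} [MetricSpace X]
    [CompactSpace X] [MeasurableSpace X] [BorelSpace X] [MetricSpace Y] [CompactSpace Y]
    [MeasurableSpace Y] [BorelSpace Y] {γ : Measure (X × Y)} {μ : Measure X} {ν : Measure Y}
    (hγ : IsCoupling γ μ ν) {c : X × Y → ℝ} (hc : Continuous c) {η : ℝ} (hη : 0 < η) :
    ∃ γ', IsCoupling γ' μ ν ∧ γ' ≪ μ.prod ν ∧ ∫ p, c p ∂γ' ≤ ∫ p, c p ∂γ + η := by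
  have := hγ.1
  have := hγ.isProbabilityMeasure_left
  have := hγ.isProbabilityMeasure_right
  obtain ⟨m, n, A, B, hA, hB, hosc⟩ := exists_isMeasurablePartition_mapsTo_Icc hc hη
  have hγ' := isCoupling_blockCoupling hA hB hγ
  have := hγ'.1
  have hint (ρ : Measure (X × Y)) [IsFiniteMeasure ρ] : Integrable c ρ :=
    hc.integrable_of_hasCompactSupport (HasCompactSupport.of_compactSpace c)
  refine ⟨_, hγ', blockCoupling_absolutelyContinuous, ?_⟩
  simpa using (hA.prod hB).integral_le_integral_add
    (fun p => blockCoupling_apply_prod hA hB hγ p.1 p.2) (hint _) (hint _) fun p => hosc p.1 p.2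

/-- The Bochner integral in `KL` is `0` when the log-density is not integrable, exactly as
`ENNReal.toReal` sends `klDiv = ∞` to `0`. -/
theorem KL_eq_toReal_klDiv {Ω : Type*} [MeasurableSpace Ω] {μ ρ : Measure Ω} [IsFiniteMeasure μ]
    [IsFiniteMeasure ρ] (h : μ ≪ ρ) (huniv : μ univ = ρ univ) :
    KL μ ρ = (InformationTheory.klDiv μ ρ).toReal := by
  rw [KL, if_pos h, InformationTheory.toReal_klDiv_of_measure_eq h huniv]
  rfl

theorem KL_nonneg {Ω : Type*} [MeasurableSpace Ω] (μ ρ : Measure Ω) [IsProbabilityMeasure μ]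
    [IsProbabilityMeasure ρ] : 0 ≤ KL μ ρ := by
  by_cases h : μ ≪ ρ
  · rw [KL_eq_toReal_klDiv h (by simp)]
    exact EReal.coe_nonneg.2 ENNReal.toReal_nonneg
  · rw [KL, if_neg h]
    exact le_top

theorem tendsto_add_mul_KL {Ω : Type*} [MeasurableSpace Ω] {μ ρ : Measure Ω}
    [IsProbabilityMeasure μ] [IsProbabilityMeasure ρ] (h : μ ≪ ρ) (C : ℝ) :
    Tendsto (fun ε : ℝ => (C : EReal) + ε * KL μ ρ) (𝓝 0) (𝓝 C) := by
  rw [KL_eq_toReal_klDiv h (by simp)]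
  simp_rw [← EReal.coe_mul, ← EReal.coe_add]
  refine EReal.tendsto_coe.2 ?_
  simpa using ((tendsto_id (x := 𝓝 (0 : ℝ))).mul_const _).const_add C

theorem smoothed_OT_tendsto_OT_as_eps_to_zero_general
    {X : Type*} [MetricSpace X] [CompactSpace X] [MeasurableSpace X] [BorelSpace X]
    (μ ν : Measure X) [IsProbabilityMeasure μ] [IsProbabilityMeasure ν]
    (c : X × X → ℝ) (hc : Continuous c) :
    Filter.Tendsto
      (fun ε : ℝ => ⨅ γ : {γ : Measure (X × X) // IsCoupling γ μ ν},
        ((∫ p, c p ∂γ.1 : ℝ) : EReal) + (ε : EReal) * KL γ.1 (μ.prod ν))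
      (nhdsWithin 0 (Set.Ioi 0))
      (nhds (⨅ γ : {γ : Measure (X × X) // IsCoupling γ μ ν},
        ((∫ p, c p ∂γ.1 : ℝ) : EReal))) := by
  refine tendsto_order.2 ⟨fun a ha => ?_, fun a ha => ?_⟩
  · filter_upwards [self_mem_nhdsWithin] with ε (hε : 0 < ε)
    refine ha.trans_le (iInf_mono fun γ => le_add_of_nonneg_right ?_)
    have := γ.2.1
    exact mul_nonneg (EReal.coe_nonneg.2 hε.le) (KL_nonneg _ _)
  · obtain ⟨γ, hγa⟩ := iInf_lt_iff.1 ha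
    obtain ⟨r, hγr, hra⟩ := EReal.exists_between_coe_real hγa
    obtain ⟨γ', hγ', hac, hcost⟩ := γ.2.exists_absolutelyContinuous_integral_le hc
      (sub_pos.2 (EReal.coe_lt_coe_iff.1 hγr))
    have hγ'a : ((∫ p, c p ∂γ' : ℝ) : EReal) < a :=
      lt_of_le_of_lt (EReal.coe_le_coe_iff.2 (by linarith)) hra
    have := hγ'.1
    filter_upwards [((tendsto_add_mul_KL hac _).mono_left nhdsWithin_le_nhds).eventually
      (gt_mem_nhds hγ'a)] with ε hε
    exact (iInf_le _ ⟨γ', hγ'⟩).trans_lt hε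

theorem smoothed_OT_tendsto_OT_as_eps_to_zero
    {X : Type*} [MetricSpace X] [CompactSpace X] [MeasurableSpace X] [BorelSpace X]
    (μ ν : Measure X) [IsProbabilityMeasure μ] [IsProbabilityMeasure ν]
    (c : X × X → ℝ) (hc : Continuous c) (hc0 : ∀ p, 0 ≤ c p) :
    Filter.Tendsto
      (fun ε : ℝ => ⨅ γ : {γ : Measure (X × X) // IsCoupling γ μ ν},
        ((∫ p, c p ∂γ.1 : ℝ) : EReal) + (ε : EReal) * KL γ.1 (μ.prod ν))
      (nhdsWithin 0 (Set.Ioi 0))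
      (nhds (⨅ γ : {γ : Measure (X × X) // IsCoupling γ μ ν},
        ((∫ p, c p ∂γ.1 : ℝ) : EReal))) :=
  smoothed_OT_tendsto_OT_as_eps_to_zero_general μ ν c hc
end
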